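/- arXiv:2306.00922 — 4 statements merged into one kernel-verified Lean document; each statement's English description precedes it below -/
import Mathlib

section
/- Let p, q, r ∈ ℂ and let u, v, w ∈ ℂ satisfy u² + v² + w² = −p/2, u²v² + u²w² + v²w² = p²/16 − r/4, and u·v·w = −q/8. Then y = u + v + w is a root of the quartic y⁴ + p·y² + q·y + r = 0. -/
/-! Since `(u + v + w)^2 - (u^2 + v^2 + w^2) = 2 (u v + u w + v w)`, its square is expressed
through `u^2 v^2 + u^2 w^2 + v^2 w^2` and `u v w`. Solving the hypotheses for `p`, `q`, `r`
turns the quartic at `u + v + w` into exactly this identity. -/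

theorem sq_add_add_sub_sq_sq {R : Type*} [CommRing R] (u v w : R) :
    ((u + v + w) ^ 2 - (u ^ 2 + v ^ 2 + w ^ 2)) ^ 2 =
      4 * (u ^ 2 * v ^ 2 + u ^ 2 * w ^ 2 + v ^ 2 * w ^ 2) + 8 * (u * v * w) * (u + v + w) := by
  ring

/-- Euler's method: `u + v + w` is a root of the depressed quartic. -/
theorem euler_quartic_root (p q r u v w : ℂ)
    (h1 : u ^ 2 + v ^ 2 + w ^ 2 = -p / 2)
    (h2 : u ^ 2 * v ^ 2 + u ^ 2 * w ^ 2 + v ^ 2 * w ^ 2 = p ^ 2 / 16 - r / 4)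
    (h3 : u * v * w = -q / 8) :
    (u + v + w) ^ 4 + p * (u + v + w) ^ 2 + q * (u + v + w) + r = 0 := by
  obtain rfl : p = -2 * (u ^ 2 + v ^ 2 + w ^ 2) := by linear_combination 2 * h1
  obtain rfl : q = -8 * (u * v * w) := by linear_combination 8 * h3
  obtain rfl : r =
      (u ^ 2 + v ^ 2 + w ^ 2) ^ 2 - 4 * (u ^ 2 * v ^ 2 + u ^ 2 * w ^ 2 + v ^ 2 * w ^ 2) := by
    linear_combination 4 * h2
  linear_combination sq_add_add_sub_sq_sq u v w
end

section
/- Let p, q, r ∈ ℂ and let u, v, w ∈ ℂ satisfy u² + v² + w² = −p/2, u²v² + u²w² + v²w² = p²/16 − r/4, and u·v·w = −q/8. Then all four numbers u+v+w, u−v−w, −u+v−w, −u−v+w are roots of y⁴ + p·y² + q·y + r = 0. -/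
/-! Solving the three hypotheses for `p`, `q`, `r` turns the quartic evaluated at `u + v + w` into a
polynomial identity in `u, v, w` that involves them only through `u², v², w²` and `u v w`. Flipping
the signs of two of `u, v, w` changes none of these, so the other three sign patterns are roots too. -/

theorem euler_quartic_root_of_sq_eq {R : Type*} [CommRing R] {p q r u v w a b c : R}
    (hp : p = -2 * (u ^ 2 + v ^ 2 + w ^ 2)) (hq : q = -8 * (u * v * w))
    (hr : r = (u ^ 2 + v ^ 2 + w ^ 2) ^ 2 - 4 * (u ^ 2 * v ^ 2 + u ^ 2 * w ^ 2 + v ^ 2 * w ^ 2))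
    (ha : a ^ 2 = u ^ 2) (hb : b ^ 2 = v ^ 2) (hc : c ^ 2 = w ^ 2) (habc : a * b * c = u * v * w) :
    (a + b + c) ^ 4 + p * (a + b + c) ^ 2 + q * (a + b + c) + r = 0 := by
  rw [hp, hq, hr, ← ha, ← hb, ← hc, ← habc]
  ring

/-- Euler's method: all four sign combinations give roots of the depressed quartic. -/
theorem euler_quartic_four_roots (p q r u v w : ℂ)
    (h1 : u ^ 2 + v ^ 2 + w ^ 2 = -p / 2)
    (h2 : u ^ 2 * v ^ 2 + u ^ 2 * w ^ 2 + v ^ 2 * w ^ 2 = p ^ 2 / 16 - r / 4)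
    (h3 : u * v * w = -q / 8) :
    ((u + v + w) ^ 4 + p * (u + v + w) ^ 2 + q * (u + v + w) + r = 0) ∧
    ((u - v - w) ^ 4 + p * (u - v - w) ^ 2 + q * (u - v - w) + r = 0) ∧
    ((-u + v - w) ^ 4 + p * (-u + v - w) ^ 2 + q * (-u + v - w) + r = 0) ∧
    ((-u - v + w) ^ 4 + p * (-u - v + w) ^ 2 + q * (-u - v + w) + r = 0) := by
  have hp : p = -2 * (u ^ 2 + v ^ 2 + w ^ 2) := by linear_combination 2 * h1
  have hq : q = -8 * (u * v * w) := by linear_combination 8 * h3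
  have hr : r = (u ^ 2 + v ^ 2 + w ^ 2) ^ 2 - 4 * (u ^ 2 * v ^ 2 + u ^ 2 * w ^ 2 + v ^ 2 * w ^ 2) := by
    linear_combination 4 * h2 + (p / 2 - (u ^ 2 + v ^ 2 + w ^ 2)) * h1
  have root := fun {a b c : ℂ} => euler_quartic_root_of_sq_eq (a := a) (b := b) (c := c) hp hq hr
  simp only [sub_eq_add_neg]
  exact ⟨root rfl rfl rfl rfl, root rfl (neg_sq v) (neg_sq w) (by ring),
    root (neg_sq u) rfl (neg_sq w) (by ring), root (neg_sq u) (neg_sq v) rfl (by ring)⟩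
end

section
/- Let K be a field of characteristic zero and L/K a Galois extension with [L : K] = p for a prime p. If K contains a primitive p-th root of unity, then there exists β ∈ L with β^p ∈ K and L = K(β). -/
/-! A Galois group of prime order is cyclic, so Kummer theory applies: with the `p`-th roots of
unity in `K`, a generator `σ` of `Gal(L/K)` has an eigenvector `β` for the eigenvalue `ζ`; then
`σ (β ^ p) = β ^ p` puts `β ^ p` in `K`, and the `p` conjugates `ζ ^ i * β` are distinct, so `β`
generates `L`. -/

open Module

theorem IsGalois.isCyclic_of_finrank_prime {K L : Type*} [Field K] [Field L] [Algebra K L]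
    [FiniteDimensional K L] [IsGalois K L] (hp : (finrank K L).Prime) : IsCyclic Gal(L/K) :=
  have : Fact (finrank K L).Prime := ⟨hp⟩
  isCyclic_of_prime_card (IsGalois.card_aut_eq_finrank K L)

theorem galois_prime_degree_is_radical_general (K L : Type*) [Field K] [Field L]
    [Algebra K L] [FiniteDimensional K L] [IsGalois K L]
    (p : ℕ) (hp : p.Prime) (hdim : Module.finrank K L = p)
    (ζ : K) (hζ : IsPrimitiveRoot ζ p) :
    ∃ β : L, β ^ p ∈ (algebraMap K L).range ∧ IntermediateField.adjoin K {β} = ⊤ := by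
  subst hdim
  have := IsGalois.isCyclic_of_finrank_prime hp
  exact exists_root_adjoin_eq_top_of_isCyclic K L ⟨ζ, (mem_primitiveRoots hp.pos).2 hζ⟩

/-- A Galois extension of prime degree `p` over a field containing a primitive
`p`-th root of unity is a simple radical extension. -/
theorem galois_prime_degree_is_radical (K L : Type*) [Field K] [Field L]
    [CharZero K] [Algebra K L] [FiniteDimensional K L] [IsGalois K L]
    (p : ℕ) (hp : p.Prime) (hdim : Module.finrank K L = p)
    (ζ : K) (hζ : IsPrimitiveRoot ζ p) :
    ∃ β : L, β ^ p ∈ (algebraMap K L).range ∧ IntermediateField.adjoin K {β} = ⊤ :=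
  galois_prime_degree_is_radical_general K L p hp hdim ζ hζ
end

section
/- Natural irrationalities: let K be a field of characteristic zero, f ∈ K[X], and M the splitting field of f over K inside an algebraic closure Ω. Let L be an intermediate extension K ⊆ L ⊆ Ω and N = L·M the splitting field of f over L (the compositum of L and M in Ω). Then restriction of automorphisms gives a group isomorphism from Gal(N/L) onto the subgroup Gal(M/(M ∩ L)) of Gal(M/K). -/
/-!
Restriction `Gal(N/L) → Gal(M/K)` is injective because `N = L(M)`: an `L`-automorphism of `N`
trivial on `M` fixes a generating set. For its image `H`, the Galois correspondence for the finite
extension `M/K` gives `H = Gal(M / Fix H)`, and an element of `M` fixed by `H` is fixed by all of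
`Gal(N/L)`, hence lies in `L` because `N/L` is Galois (it is the splitting field of `f` over `L`,
and the characteristic is zero). So `Fix H = M ∩ L`.
-/

namespace IntermediateField

section RestrictRestrict

variable {F K L E : Type*} [Field F] [Field K] [Field L] [Field E] [Algebra F K] [Algebra F L]
  [Algebra F E] [Algebra K E] [Algebra L E] [IsScalarTower F K E] [IsScalarTower F L E]
  [Normal F K]

theorem restrictRestrictAlgEquivMapHom_commutes (σ : Gal(E/L)) (x : K) :
    algebraMap K E (restrictRestrictAlgEquivMapHom F K L E σ x) = σ (algebraMap K E x) :=
  AlgEquiv.restrictNormal_commutes _ K x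

theorem restrictRestrictAlgEquivMapHom_injective_of_adjoin_eq_top
    (h : adjoin L (Set.range (algebraMap K E)) = ⊤) :
    Function.Injective (restrictRestrictAlgEquivMapHom F K L E) := by
  refine (injective_iff_map_eq_one _).mpr fun σ hσ ↦ ?_
  have hfix : adjoin L (Set.range (algebraMap K E)) ≤ fixedField (Subgroup.zpowers σ) := by
    refine adjoin_le_iff.mpr ?_
    rintro _ ⟨x, rfl⟩
    rw [SetLike.mem_coe, mem_fixedField_iff, Subgroup.forall_mem_zpowers]
    refine MulAction.mem_fixedBy_zpow (α := E) (g := σ) ?_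
    rw [MulAction.mem_fixedBy, AlgEquiv.smul_def,
      ← restrictRestrictAlgEquivMapHom_commutes (F := F), hσ, AlgEquiv.one_apply]
  rwa [h, le_iff_le, fixingSubgroup_top, Subgroup.zpowers_le, Subgroup.mem_bot] at hfix

theorem range_restrictRestrictAlgEquivMapHom [FiniteDimensional F K] [IsGalois L E] :
    (restrictRestrictAlgEquivMapHom F K L E).range =
      fixingSubgroup ((IsScalarTower.toAlgHom F L E).fieldRange.comap
        (IsScalarTower.toAlgHom F K E)) := by
  set ψ := restrictRestrictAlgEquivMapHom F K L E
  refine le_antisymm ?_ ?_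
  · rintro _ ⟨σ, rfl⟩ ⟨x, y, hy : algebraMap L E y = algebraMap K E x⟩
    apply (algebraMap K E).injective
    change algebraMap K E (ψ σ x) = algebraMap K E x
    rw [restrictRestrictAlgEquivMapHom_commutes, ← hy, σ.commutes]
  · have hfixed : fixedField ψ.range ≤ (IsScalarTower.toAlgHom F L E).fieldRange.comap
        (IsScalarTower.toAlgHom F K E) := by
      intro x hx
      have : algebraMap K E x ∈ (⊥ : IntermediateField L E) := by
        refine (InfiniteGalois.mem_bot_iff_fixed _).mpr fun σ ↦ ?_
        rw [← restrictRestrictAlgEquivMapHom_commutes (F := F)]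
        exact congrArg (algebraMap K E) (hx ⟨ψ σ, σ, rfl⟩)
      exact mem_bot.mp this
    exact fixingSubgroup_fixedField ψ.range ▸ fixingSubgroup_le hfixed

end RestrictRestrict

section Compositum

variable {F Ω : Type*} [Field F] [Field Ω] [Algebra F Ω] {L M : IntermediateField F Ω}

instance algebraExtendScalarsSup (h : L ≤ L ⊔ M) : Algebra M (extendScalars h) :=
  (inclusion le_sup_right : M →ₐ[F] ↥(L ⊔ M)).toAlgebra

instance isScalarTower_extendScalarsSup (h : L ≤ L ⊔ M) : IsScalarTower F M (extendScalars h) :=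
  IsScalarTower.of_algebraMap_eq fun _ ↦ rfl

theorem extendScalars_sup_eq_adjoin (h : L ≤ L ⊔ M) {S : Set Ω} (hS : adjoin F S = M) :
    extendScalars h = adjoin L S :=
  restrictScalars_injective F <| by
    rw [extendScalars_restrictScalars, restrictScalars_adjoin_eq_sup, hS]

theorem adjoin_range_algebraMap_extendScalars_sup (h : L ≤ L ⊔ M) :
    adjoin L (Set.range (algebraMap M (extendScalars h))) = ⊤ := by
  apply lift_injective
  rw [lift_adjoin, lift_top, ← Set.range_comp]
  exact (congrArg (adjoin L) Subtype.range_coe).trans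
    (extendScalars_sup_eq_adjoin h (adjoin_self F M)).symm

theorem comap_fieldRange_extendScalars_sup (h : L ≤ L ⊔ M) :
    (IsScalarTower.toAlgHom F L (extendScalars h)).fieldRange.comap
      (IsScalarTower.toAlgHom F M (extendScalars h)) = L.comap M.val := by
  ext x
  refine ⟨fun ⟨y, hy⟩ ↦ ?_, fun hx ↦ ⟨⟨x, hx⟩, rfl⟩⟩
  have hyx : (y : Ω) = x := congrArg Subtype.val hy
  exact show (x : Ω) ∈ L from hyx ▸ y.2

theorem isSplittingField_extendScalars_sup {p : Polynomial F} (h : L ≤ L ⊔ M)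
    (hM : p.IsSplittingField F M) :
    (p.map (algebraMap F L)).IsSplittingField L (extendScalars h) := by
  obtain ⟨hsplits, hMroots⟩ := isSplittingField_iff.mp hM
  have hroots : (p.map (algebraMap F L)).rootSet Ω = p.rootSet Ω := by
    simp [Polynomial.rootSet, Polynomial.aroots_map]
  rw [extendScalars_sup_eq_adjoin h hMroots.symm, ← hroots]
  refine adjoin_rootSet_isSplittingField ?_
  rw [Polynomial.map_map, ← IsScalarTower.algebraMap_eq]
  exact hsplits.of_algHom M.val

end Compositum

end IntermediateField

open IntermediateField

theorem natural_irrationalities_general (K Ω : Type*) [Field K] [CharZero K] [Field Ω]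
    [Algebra K Ω] (f : Polynomial K)
    (M L N : IntermediateField K Ω)
    (hM : Polynomial.IsSplittingField K M f)
    (hN : N = L ⊔ M) (hLN : L ≤ N) :
    ∃ ψ : (IntermediateField.extendScalars hLN ≃ₐ[L] IntermediateField.extendScalars hLN)
        →* (M ≃ₐ[K] M),
      Function.Injective ψ ∧
        ∀ τ : M ≃ₐ[K] M, τ ∈ ψ.range ↔ ∀ x : M, (x : Ω) ∈ L → τ x = x := by
  subst hN
  have : FiniteDimensional K M := hM.finiteDimensional M f
  have : Normal K M := Normal.of_isSplittingField f
  have : Normal L (extendScalars hLN) :=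
    have := isSplittingField_extendScalars_sup hLN hM
    Normal.of_isSplittingField (f.map (algebraMap K L))
  have : IsGalois L (extendScalars hLN) := ⟨⟩
  refine ⟨restrictRestrictAlgEquivMapHom K M L (extendScalars hLN),
    restrictRestrictAlgEquivMapHom_injective_of_adjoin_eq_top
      (adjoin_range_algebraMap_extendScalars_sup hLN), fun τ ↦ ?_⟩
  rw [range_restrictRestrictAlgEquivMapHom, comap_fieldRange_extendScalars_sup]
  exact ⟨fun hτ x hx ↦ hτ ⟨x, hx⟩, fun hτ x ↦ hτ x x.2⟩

/-- Natural irrationalities: restriction gives an isomorphism from `Gal(N/L)` onto the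
subgroup `Gal(M/(M ∩ L))` of `Gal(M/K)`, where `M` is the splitting field of `f` over
`K` inside an algebraic closure `Ω`, `L` is any intermediate field, and `N = L ⊔ M`. -/
theorem natural_irrationalities (K Ω : Type*) [Field K] [CharZero K] [Field Ω]
    [Algebra K Ω] [IsAlgClosure K Ω] (f : Polynomial K)
    (M L N : IntermediateField K Ω)
    (hM : Polynomial.IsSplittingField K M f)
    (hN : N = L ⊔ M) (hLN : L ≤ N) :
    ∃ ψ : (IntermediateField.extendScalars hLN ≃ₐ[L] IntermediateField.extendScalars hLN)
        →* (M ≃ₐ[K] M),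
      Function.Injective ψ ∧
        ∀ τ : M ≃ₐ[K] M, τ ∈ ψ.range ↔ ∀ x : M, (x : Ω) ∈ L → τ x = x :=
  natural_irrationalities_general K Ω f M L N hM hN hLN
end
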